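/- Let G be a prime (P_6, bull, gem)-free graph containing five pairwise disjoint vertex subsets U_1,...,U_5 (indices mod 5) such that U_i is anticomplete to U_{i-2} ∪ U_{i+2}, each U_i contains a vertex u_i complete to U_{i-1} ∪ U_{i+1}, and U_1 ∪ ... ∪ U_5 is maximal with these properties. Then each U_i is a stable set. -/

import Mathlib

/-!
Let `a b` be an edge inside `U₀` and let `v ∉ U₀` see `a` but not `b`. Choose centres
`u₁, …, u₄` of the other parts. For every edge `q r` from `U₂` to `U₃`, `a u₁ q r u₄` is an
induced five-cycle on which `b` is a true twin of `a`, and bull- and gem-freeness force `v`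
to see `u₁` and `u₄` but neither `q` nor `r`. So `v` lies in no part and could be added to
`U₀`, contradicting maximality. Hence no vertex outside `Uᵢ` distinguishes the ends of an edge of
`G[Uᵢ]`, and a component of `G[Uᵢ]` containing an edge would be a proper homogeneous set.
-/

/-- The bull: vertices `a,b,c,d,e = 0,1,2,3,4` with edges `ab, bc, cd, be, ce`. -/
def bull : SimpleGraph (Fin 5) :=
  SimpleGraph.fromRel (fun a b => (a, b) ∈
    ([(0,1),(1,2),(2,3),(1,4),(2,4)] : List (Fin 5 × Fin 5)))

/-- The gem: a path `v₁v₂v₃v₄ = 0,1,2,3` plus a dominating vertex `v₅ = 4`. -/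
def gem : SimpleGraph (Fin 5) :=
  SimpleGraph.fromRel (fun a b => (a, b) ∈
    ([(0,1),(1,2),(2,3),(4,0),(4,1),(4,2),(4,3)] : List (Fin 5 × Fin 5)))

/-- `G` contains no induced subgraph isomorphic to `F`. -/
def InducedFree {α β : Type*} (F : SimpleGraph α) (G : SimpleGraph β) : Prop :=
  ¬ ∃ f : α ↪ β, ∀ a b : α, G.Adj (f a) (f b) ↔ F.Adj a b

/-- A homogeneous set: every vertex outside `S` is complete or anticomplete to `S`. -/
def IsHomog {V : Type*} (G : SimpleGraph V) (S : Set V) : Prop :=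
  ∀ v ∉ S, (∀ s ∈ S, G.Adj v s) ∨ (∀ s ∈ S, ¬ G.Adj v s)

/-- A graph is prime if it has no proper homogeneous set. -/
def IsPrime {V : Type*} (G : SimpleGraph V) : Prop :=
  ¬ ∃ S : Set V, IsHomog G S ∧ 2 ≤ S.ncard ∧ S ≠ Set.univ

/-- The structural property of the 5-tuple `(U₁,…,U₅)` (indices mod 5): the `Uᵢ` are
pairwise disjoint, `Uᵢ` is anticomplete to `U_{i+2} ∪ U_{i-2}`, and each `Uᵢ`
contains a vertex complete to `U_{i-1} ∪ U_{i+1}`. -/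
def BlownUpC5 {V : Type*} (G : SimpleGraph V) (U : Fin 5 → Set V) : Prop :=
  (∀ i j : Fin 5, i ≠ j → Disjoint (U i) (U j)) ∧
  (∀ i : Fin 5, ∀ a ∈ U i, ∀ b, b ∈ U (i + 2) ∪ U (i + 3) → ¬ G.Adj a b) ∧
  (∀ i : Fin 5, ∃ u ∈ U i, ∀ b, b ∈ U (i + 1) ∪ U (i + 4) → G.Adj u b)

instance : DecidableRel bull.Adj := fun a b =>
  decidable_of_iff _ (SimpleGraph.fromRel_adj _ a b).symm

instance : DecidableRel gem.Adj := fun a b =>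
  decidable_of_iff _ (SimpleGraph.fromRel_adj _ a b).symm

namespace InducedFree

variable {α β : Type*} {F : SimpleGraph α} {G : SimpleGraph β}

/-- A map preserving and reflecting adjacency is automatically injective when no two vertices
of `F` have the same neighbourhood. -/
theorem not_forall_adj_iff (hG : InducedFree F G)
    (hF : ∀ a b, (∀ c, F.Adj a c ↔ F.Adj b c) → a = b) (f : α → β) :
    ¬ ∀ a b, G.Adj (f a) (f b) ↔ F.Adj a b := by
  intro hf
  refine hG ⟨⟨f, fun a b hab => hF a b fun c => ?_⟩, hf⟩
  rw [← hf, ← hf, hab]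

variable {p₀ p₁ p₂ p₃ p₄ : β}

theorem bull_false (hG : InducedFree bull G)
    (h₀₁ : G.Adj p₀ p₁) (h₁₂ : G.Adj p₁ p₂) (h₂₃ : G.Adj p₂ p₃) (h₁₄ : G.Adj p₁ p₄)
    (h₂₄ : G.Adj p₂ p₄) (h₀₂ : ¬ G.Adj p₀ p₂) (h₀₃ : ¬ G.Adj p₀ p₃) (h₀₄ : ¬ G.Adj p₀ p₄)
    (h₁₃ : ¬ G.Adj p₁ p₃) (h₃₄ : ¬ G.Adj p₃ p₄) : False := by
  refine hG.not_forall_adj_iff (by decide) ![p₀, p₁, p₂, p₃, p₄] fun i j => ?_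
  fin_cases i <;> fin_cases j <;> simp [bull, *] <;> rwa [G.adj_comm]

theorem gem_false (hG : InducedFree gem G)
    (h₀₁ : G.Adj p₀ p₁) (h₁₂ : G.Adj p₁ p₂) (h₂₃ : G.Adj p₂ p₃) (h₄₀ : G.Adj p₄ p₀)
    (h₄₁ : G.Adj p₄ p₁) (h₄₂ : G.Adj p₄ p₂) (h₄₃ : G.Adj p₄ p₃)
    (h₀₂ : ¬ G.Adj p₀ p₂) (h₀₃ : ¬ G.Adj p₀ p₃) (h₁₃ : ¬ G.Adj p₁ p₃) : False := by
  refine hG.not_forall_adj_iff (by decide) ![p₀, p₁, p₂, p₃, p₄] fun i j => ?_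
  fin_cases i <;> fin_cases j <;> simp [gem, *] <;> rwa [G.adj_comm]

end InducedFree

/-- `a p q r s` is an induced five-cycle and `b` is a true twin of `a` on it. -/
structure TwinC5 {V : Type*} (G : SimpleGraph V) (a b p q r s : V) : Prop where
  adj_ab : G.Adj a b
  adj_ap : G.Adj a p
  adj_bp : G.Adj b p
  adj_pq : G.Adj p q
  adj_qr : G.Adj q r
  adj_rs : G.Adj r s
  adj_as : G.Adj a s
  adj_bs : G.Adj b s
  not_adj_aq : ¬ G.Adj a q
  not_adj_ar : ¬ G.Adj a r
  not_adj_bq : ¬ G.Adj b q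
  not_adj_br : ¬ G.Adj b r
  not_adj_pr : ¬ G.Adj p r
  not_adj_ps : ¬ G.Adj p s
  not_adj_qs : ¬ G.Adj q s

namespace TwinC5

variable {V : Type*} {G : SimpleGraph V} {a b p q r s v : V}

theorem reflect (h : TwinC5 G a b p q r s) : TwinC5 G a b s r q p where
  adj_ab := h.adj_ab
  adj_ap := h.adj_as
  adj_bp := h.adj_bs
  adj_pq := h.adj_rs.symm
  adj_qr := h.adj_qr.symm
  adj_rs := h.adj_pq.symm
  adj_as := h.adj_ap
  adj_bs := h.adj_bp
  not_adj_aq := h.not_adj_ar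
  not_adj_ar := h.not_adj_aq
  not_adj_bq := h.not_adj_br
  not_adj_br := h.not_adj_bq
  not_adj_pr := fun h' => h.not_adj_qs h'.symm
  not_adj_ps := fun h' => h.not_adj_ps h'.symm
  not_adj_qs := fun h' => h.not_adj_pr h'.symm

theorem not_adj_of_adj (h : TwinC5 G a b p q r s) (hbull : InducedFree bull G)
    (hgem : InducedFree gem G) (hav : G.Adj a v) (hbv : ¬ G.Adj b v) (hpv : G.Adj p v) :
    ¬ G.Adj q v := by
  intro hqv
  by_cases hrv : G.Adj r v
  · exact hgem.gem_false h.adj_ap h.adj_pq h.adj_qr hav.symm hpv.symm hqv.symm hrv.symm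
      h.not_adj_aq h.not_adj_ar h.not_adj_pr
  · exact hbull.bull_false h.adj_bp h.adj_pq h.adj_qr hpv hqv h.not_adj_bq h.not_adj_br hbv
      h.not_adj_pr hrv

theorem adj_of_adj (h : TwinC5 G a b p q r s) (hbull : InducedFree bull G)
    (hgem : InducedFree gem G) (hav : G.Adj a v) (hbv : ¬ G.Adj b v) (hpv : G.Adj p v) :
    G.Adj s v := by
  by_contra hsv
  exact hbull.bull_false h.adj_pq.symm h.adj_ap.symm h.adj_as hpv hav
    (fun h' => h.not_adj_aq h'.symm) h.not_adj_qs (h.not_adj_of_adj hbull hgem hav hbv hpv)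
    h.not_adj_ps hsv

theorem adj_of_not_adj (h : TwinC5 G a b p q r s) (hbull : InducedFree bull G)
    (hav : G.Adj a v) (hbv : ¬ G.Adj b v) (hqv : ¬ G.Adj q v) : G.Adj p v := by
  by_contra hpv
  exact hbull.bull_false h.adj_pq.symm h.adj_ap.symm hav h.adj_bp.symm h.adj_ab
    (fun h' => h.not_adj_aq h'.symm) hqv (fun h' => h.not_adj_bq h'.symm) hpv
    (fun h' => hbv h'.symm)

theorem adj_or_adj (h : TwinC5 G a b p q r s) (hbull : InducedFree bull G)
    (hav : G.Adj a v) (hbv : ¬ G.Adj b v) : G.Adj p v ∨ G.Adj s v := by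
  by_contra! ⟨hpv, hsv⟩
  have hqv : G.Adj q v := by_contra fun hqv => hpv (h.adj_of_not_adj hbull hav hbv hqv)
  have hrv : G.Adj r v := by_contra fun hrv => hsv (h.reflect.adj_of_not_adj hbull hav hbv hrv)
  exact hbull.bull_false h.adj_pq h.adj_qr h.adj_rs hqv hrv h.not_adj_pr h.not_adj_ps hpv
    h.not_adj_qs hsv

theorem adj_ends_not_adj_middle (h : TwinC5 G a b p q r s) (hbull : InducedFree bull G)
    (hgem : InducedFree gem G) (hav : G.Adj a v) (hbv : ¬ G.Adj b v) :
    G.Adj p v ∧ G.Adj s v ∧ ¬ G.Adj q v ∧ ¬ G.Adj r v := by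
  have hends : G.Adj p v ∧ G.Adj s v := (h.adj_or_adj hbull hav hbv).elim
    (fun hpv => ⟨hpv, h.adj_of_adj hbull hgem hav hbv hpv⟩)
    (fun hsv => ⟨h.reflect.adj_of_adj hbull hgem hav hbv hsv, hsv⟩)
  exact ⟨hends.1, hends.2, h.not_adj_of_adj hbull hgem hav hbv hends.1,
    h.reflect.not_adj_of_adj hbull hgem hav hbv hends.2⟩

end TwinC5

theorem Function.mem_update_insert {ι α : Type*} [DecidableEq ι] {U : ι → Set α} {i j : ι}
    {v x : α} : x ∈ Function.update U i (insert v (U i)) j ↔ j = i ∧ x = v ∨ x ∈ U j := by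
  rcases eq_or_ne j i with rfl | h <;> simp [*]

namespace BlownUpC5

variable {V : Type*} {G : SimpleGraph V} {U : Fin 5 → Set V}

theorem not_adj (hU : BlownUpC5 G U) {i j : Fin 5} (hij : j = i + 2 ∨ j = i + 3) {x y : V}
    (hx : x ∈ U i) (hy : y ∈ U j) : ¬ G.Adj x y :=
  hU.2.1 i x hx y (by rcases hij with rfl | rfl; exacts [Or.inl hy, Or.inr hy])

theorem rotate (hU : BlownUpC5 G U) (k : Fin 5) : BlownUpC5 G (fun j => U (j + k)) := by
  refine ⟨fun i j hij => hU.1 _ _ (by simpa using hij), fun i a ha b hb => hU.2.1 _ a ha b ?_,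
    fun i => ?_⟩
  · simpa only [add_right_comm] using hb
  · simpa only [add_right_comm] using hU.2.2 (i + k)

theorem ne_univ (hU : BlownUpC5 G U) (i : Fin 5) : U i ≠ Set.univ := by
  obtain ⟨u, hu, -⟩ := hU.2.2 (i + 2)
  intro h
  exact Set.disjoint_left.1 (hU.1 i (i + 2) (by simp)) (h ▸ Set.mem_univ u) hu

theorem update_insert (hU : BlownUpC5 G U) {u : Fin 5 → V} (hu : ∀ j, u j ∈ U j)
    (hcompl : ∀ j, ∀ b, b ∈ U (j + 1) ∪ U (j + 4) → G.Adj (u j) b) {v : V}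
    (hv : ∀ j, v ∉ U j) (h2 : ∀ x ∈ U 2, ¬ G.Adj x v) (h3 : ∀ x ∈ U 3, ¬ G.Adj x v)
    (h1 : G.Adj (u 1) v) (h4 : G.Adj (u 4) v) :
    BlownUpC5 G (Function.update U 0 (insert v (U 0))) := by
  simp only [BlownUpC5, Set.mem_union, Function.mem_update_insert]
  refine ⟨fun i j hij => Set.disjoint_left.2 fun x hxi hxj => ?_, fun i x hx y hy => ?_,
    fun i => ⟨u i, Or.inr (hu i), fun x hx => ?_⟩⟩
  · rw [Function.mem_update_insert] at hxi hxj
    rcases hxi with ⟨rfl, rfl⟩ | hxi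
    · rcases hxj with ⟨rfl, -⟩ | hxj
      exacts [hij rfl, hv j hxj]
    · rcases hxj with ⟨rfl, rfl⟩ | hxj
      exacts [hv i hxi, Set.disjoint_left.1 (hU.1 i j hij) hxi hxj]
  · rcases hx with ⟨rfl, rfl⟩ | hx
    · rcases hy with (⟨h, -⟩ | hy) | (⟨h, -⟩ | hy)
      exacts [absurd h (by decide), fun h => h2 y hy h.symm, absurd h (by decide),
        fun h => h3 y hy h.symm]
    · rcases hy with (⟨h, rfl⟩ | hy) | (⟨h, rfl⟩ | hy)
      · obtain rfl : i = 3 := eq_sub_of_add_eq h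
        exact h3 x hx
      · exact hU.2.1 i x hx y (Or.inl hy)
      · obtain rfl : i = 2 := eq_sub_of_add_eq h
        exact h2 x hx
      · exact hU.2.1 i x hx y (Or.inr hy)
  · rcases hx with (⟨h, rfl⟩ | hx) | (⟨h, rfl⟩ | hx)
    · obtain rfl : i = 4 := eq_sub_of_add_eq h
      exact h4
    · exact hcompl i x (Or.inl hx)
    · obtain rfl : i = 1 := eq_sub_of_add_eq h
      exact h1
    · exact hcompl i x (Or.inr hx)

theorem twinC5 (hU : BlownUpC5 G U) {u : Fin 5 → V} (hu : ∀ j, u j ∈ U j)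
    (hcompl : ∀ j, ∀ b, b ∈ U (j + 1) ∪ U (j + 4) → G.Adj (u j) b) {a b q r : V}
    (ha : a ∈ U 0) (hb : b ∈ U 0) (hab : G.Adj a b) (hq : q ∈ U 2) (hr : r ∈ U 3)
    (hqr : G.Adj q r) : TwinC5 G a b (u 1) q r (u 4) where
  adj_ab := hab
  adj_ap := (hcompl 1 a (Or.inr ha)).symm
  adj_bp := (hcompl 1 b (Or.inr hb)).symm
  adj_pq := hcompl 1 q (Or.inl hq)
  adj_qr := hqr
  adj_rs := (hcompl 4 r (Or.inr hr)).symm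
  adj_as := (hcompl 4 a (Or.inl ha)).symm
  adj_bs := (hcompl 4 b (Or.inl hb)).symm
  not_adj_aq := hU.not_adj (by decide) ha hq
  not_adj_ar := hU.not_adj (by decide) ha hr
  not_adj_bq := hU.not_adj (by decide) hb hq
  not_adj_br := hU.not_adj (by decide) hb hr
  not_adj_pr := hU.not_adj (by decide) (hu 1) hr
  not_adj_ps := hU.not_adj (by decide) (hu 1) (hu 4)
  not_adj_qs := hU.not_adj (by decide) hq (hu 4)

theorem adj_of_adj_of_mem_zero (hU : BlownUpC5 G U) (hbull : InducedFree bull G)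
    (hgem : InducedFree gem G)
    (hsat : ∀ v, (∀ j, v ∉ U j) → ¬ BlownUpC5 G (Function.update U 0 (insert v (U 0))))
    {a b v : V} (ha : a ∈ U 0) (hb : b ∈ U 0) (hab : G.Adj a b) (hv : v ∉ U 0)
    (hav : G.Adj a v) : G.Adj b v := by
  by_contra hbv
  choose u hu hcompl using hU.2.2
  have hsplit : ∀ q ∈ U 2, ∀ r ∈ U 3, G.Adj q r →
      G.Adj (u 1) v ∧ G.Adj (u 4) v ∧ ¬ G.Adj q v ∧ ¬ G.Adj r v := fun q hq r hr hqr =>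
    (hU.twinC5 hu hcompl ha hb hab hq hr hqr).adj_ends_not_adj_middle hbull hgem hav hbv
  obtain ⟨h1, h4, -, -⟩ := hsplit (u 2) (hu 2) (u 3) (hu 3) (hcompl 2 _ (Or.inl (hu 3)))
  have hv' : ∀ j, v ∉ U j := by
    intro j hj
    fin_cases j
    exacts [hv hj, hU.not_adj (by decide) (hu 4) hj h4, hU.not_adj (by decide) ha hj hav,
      hU.not_adj (by decide) ha hj hav, hU.not_adj (by decide) (hu 1) hj h1]
  refine hsat v hv' (hU.update_insert hu hcompl hv' (fun q hq => ?_) (fun r hr => ?_) h1 h4)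
  · exact (hsplit q hq (u 3) (hu 3) (hcompl 3 _ (Or.inr hq)).symm).2.2.1
  · exact (hsplit (u 2) (hu 2) r hr (hcompl 2 _ (Or.inl hr))).2.2.2

theorem not_update_insert_rotate
    (hmax : ∀ U' : Fin 5 → Set V, (∀ i, U i ⊆ U' i) → BlownUpC5 G U' →
      (⋃ i, U' i) = (⋃ i, U i))
    (k : Fin 5) (v : V) (hv : ∀ j, v ∉ U (j + k)) :
    ¬ BlownUpC5 G (Function.update (fun j => U (j + k)) 0 (insert v (U (0 + k)))) := by
  intro h
  have hrot : (fun j => Function.update (fun j => U (j + k)) 0 (insert v (U (0 + k))) (j + -k))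
      = Function.update U k (insert v (U k)) := by
    funext j
    rcases eq_or_ne j k with rfl | hj
    · simp
    · rw [Function.update_of_ne (by rwa [← sub_eq_add_neg, sub_ne_zero]),
        Function.update_of_ne hj]
      simp
  have hmem : v ∈ ⋃ i, U i := by
    rw [← hmax _ (fun i x hx => Function.mem_update_insert.2 (Or.inr hx)) (hrot ▸ h.rotate (-k))]
    exact Set.mem_iUnion.2 ⟨k, by simp⟩
  obtain ⟨j, hj⟩ := Set.mem_iUnion.1 hmem
  exact hv (j - k) (by simpa using hj)

end BlownUpC5

section Prime

open SimpleGraph ConnectedComponent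

variable {V : Type*} {G : SimpleGraph V} {S : Set V} {a x : V}

-- `G[S]` is taken as a graph on all of `V`, in which the vertices outside `S` are isolated.
theorem mem_of_reachable_spanningCoe_induce (ha : a ∈ S)
    (h : ((⊤ : G.Subgraph).induce S).spanningCoe.Reachable a x) : x ∈ S := by
  rw [reachable_iff_reflTransGen] at h
  rcases h.cases_tail with rfl | ⟨y, -, hyx⟩
  exacts [ha, hyx.2.1]

theorem isHomog_connectedComponent_supp (ha : a ∈ S)
    (h : ∀ x ∈ S, ∀ y ∈ S, G.Adj x y → ∀ v ∉ S, G.Adj x v → G.Adj y v) :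
    IsHomog G (((⊤ : G.Subgraph).induce S).spanningCoe.connectedComponentMk a).supp := by
  set H := ((⊤ : G.Subgraph).induce S).spanningCoe
  intro v hv
  by_cases hex : ∃ s ∈ (H.connectedComponentMk a).supp, G.Adj v s
  · left
    obtain ⟨s, hs, hvs⟩ := hex
    rw [mem_supp_iff] at hs
    have hsS : s ∈ S := mem_of_reachable_spanningCoe_induce ha (ConnectedComponent.exact hs.symm)
    have hvS : v ∉ S := fun hvS =>
      hv ((connectedComponentMk_eq_of_adj (G := H) (by simp [H, hvS, hsS, hvs])).trans hs)
    intro t ht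
    rw [mem_supp_iff] at ht
    have hst := (reachable_iff_reflTransGen _ _).1 (ConnectedComponent.exact (hs.trans ht.symm))
    clear ht
    induction hst with
    | refl => exact hvs
    | tail _ hyz ih => exact (h _ hyz.1 _ hyz.2.1 hyz.2.2 v hvS ih.symm).symm
  · exact Or.inr fun s hs hvs => hex ⟨s, hs, hvs⟩

theorem IsPrime.not_adj_of_forall_adj_imp_adj [Finite V] (hG : IsPrime G) (hS : S ≠ Set.univ)
    (h : ∀ x ∈ S, ∀ y ∈ S, G.Adj x y → ∀ v ∉ S, G.Adj x v → G.Adj y v) :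
    ∀ a ∈ S, ∀ b ∈ S, ¬ G.Adj a b := by
  intro a ha b hb hab
  set C := (((⊤ : G.Subgraph).induce S).spanningCoe.connectedComponentMk a).supp
  have hbC : b ∈ C := connectedComponentMk_eq_of_adj (by simp [ha, hb, hab.symm])
  refine hG ⟨C, isHomog_connectedComponent_supp ha h, ?_, fun hC => ?_⟩
  · calc 2 = ({a, b} : Set V).ncard := (Set.ncard_pair hab.ne).symm
      _ ≤ C.ncard := Set.ncard_le_ncard (Set.insert_subset rfl (Set.singleton_subset_iff.2 hbC))
  · obtain ⟨x, hx⟩ := (Set.ne_univ_iff_exists_notMem S).1 hS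
    have hxC : x ∈ C := hC ▸ Set.mem_univ x
    exact hx (mem_of_reachable_spanningCoe_induce ha (ConnectedComponent.exact hxC).symm)

end Prime

theorem blownUpC5_parts_stable_general {V : Type*} [Fintype V] (G : SimpleGraph V)
    (hprime : IsPrime G)
    (hbull : InducedFree bull G) (hgem : InducedFree gem G)
    (U : Fin 5 → Set V) (hU : BlownUpC5 G U)
    (hmax : ∀ U' : Fin 5 → Set V, (∀ i, U i ⊆ U' i) → BlownUpC5 G U' →
      (⋃ i, U' i) = (⋃ i, U i)) :
    ∀ i : Fin 5, ∀ a ∈ U i, ∀ b ∈ U i, ¬ G.Adj a b := by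
  intro i
  refine hprime.not_adj_of_forall_adj_imp_adj (hU.ne_univ i) fun a ha b hb hab v hv hav => ?_
  rw [← zero_add i] at ha hb hv
  exact (hU.rotate i).adj_of_adj_of_mem_zero hbull hgem
    (BlownUpC5.not_update_insert_rotate hmax i) ha hb hab hv hav

/-- Claim (4) in the proof of Theorem 3.1: in a prime `(P₆, bull, gem)`-free graph,
if `(U₁,…,U₅)` is as above with `U₁ ∪ ⋯ ∪ U₅` maximal, then each `Uᵢ` is stable. -/
theorem blownUpC5_parts_stable {V : Type*} [Fintype V] (G : SimpleGraph V)
    (hprime : IsPrime G)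
    (hP6 : InducedFree (SimpleGraph.pathGraph 6) G)
    (hbull : InducedFree bull G) (hgem : InducedFree gem G)
    (U : Fin 5 → Set V) (hU : BlownUpC5 G U)
    (hmax : ∀ U' : Fin 5 → Set V, (∀ i, U i ⊆ U' i) → BlownUpC5 G U' →
      (⋃ i, U' i) = (⋃ i, U i)) :
    ∀ i : Fin 5, ∀ a ∈ U i, ∀ b ∈ U i, ¬ G.Adj a b :=
  blownUpC5_parts_stable_general G hprime hbull hgem U hU hmax
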